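/- Addition formula for noncommutative shifted factorials of type II with three parameters: Let A, B, C be elements of a unit ring R such that the element A+B−C commutes with each of A, B and C, and let n be a nonnegative integer. Then ⌊C−B+I, C−A+I; C, C−A−B⌉_n · (C−A+nI)^{−1}(C−B+nI)^{−1} − C^{−1}A(A+B−C+(1−n)I)^{−1}B(A+B−C−nI)^{−1}(A+B−C+I) · ⌊C−B+I, C−A+I; C+I, C−A−B−I⌉_n · (C−A+nI)^{−1}(C−B+nI)^{−1} = ⌊C−B+I, C−A+I; C, C−A−B⌉_{n+1} · (C−A+(n+1)I)^{−1}(C−B+(n+1)I)^{−1}. -/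

import Mathlib

/-!
Write `E = C - A - B`. The hypotheses say that `E` commutes with `A`, `B` and `C`, and they give
`(C - B + t) (C - A + t) = (C + t) (E + t) + A B` for every natural `t`. By this identity,
`(C + j)⁻¹ A B (E - 1 + j)` intertwines the `j`-th factors of `⌊C-B+1, C-A+1; C+1, E-1⌉` and
`⌊C-B+1, C-A+1; C, E⌉`, so the two products telescope to the contiguity relation
`C⁻¹ A B (E - 1) ⌊…; C+1, E-1⌉_n = ⌊…; C, E⌉_n (C+n)⁻¹ A B (E - 1 + n)`.
The coefficient of the second term is `-C⁻¹ A B (E - 1) (E - 1 + n)⁻¹ (E + n)⁻¹`, so after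
substituting the relation both sides of the addition formula become `⌊…; C, E⌉_n (C+n)⁻¹ (E+n)⁻¹`.
-/

/-- Ordered (noncommutative) product `f 0 * f 1 * ⋯ * f (n-1)`. -/
def opr {R : Type*} [Ring R] (n : ℕ) (f : ℕ → R) : R :=
  ((List.range n).map f).prod

open scoped Ring

section RingInverse
variable {M₀ : Type*} [MonoidWithZero M₀] {u y : M₀}

theorem Commute.ringInverse_right (h : Commute u y) : Commute u y⁻¹ʳ := by
  by_cases hy : IsUnit y
  · obtain ⟨y, rfl⟩ := hy
    rw [Ring.inverse_unit]
    exact h.units_inv_right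
  · rw [Ring.inverse_non_unit y hy]
    exact Commute.zero_right u

theorem Commute.ringInverse_left (h : Commute u y) : Commute u⁻¹ʳ y :=
  h.symm.ringInverse_right.symm

theorem Commute.mul_mul_ringInverse_mul_cancel (h : Commute u y) (hu : IsUnit u) (z : M₀) :
    u * y * (u⁻¹ʳ * z) = y * z := by
  rw [h.eq, mul_assoc, Ring.mul_inverse_cancel_left _ _ hu]

theorem Commute.ringInverse_mul_mul_cancel (h : Commute u y) (hu : IsUnit u) :
    u⁻¹ʳ * (y * u) = y := by
  rw [← h.eq, Ring.inverse_mul_cancel_left _ _ hu]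

theorem Ring.inverse_neg [HasDistribNeg M₀] (a : M₀) : (-a)⁻¹ʳ = -a⁻¹ʳ := by
  by_cases ha : IsUnit a
  · obtain ⟨a, rfl⟩ := ha
    rw [← Units.val_neg, Ring.inverse_unit, Ring.inverse_unit, ← Units.val_neg, inv_neg]
  · rw [Ring.inverse_non_unit a ha, Ring.inverse_non_unit (-a) (mt (IsUnit.neg_iff a).mp ha),
      neg_zero]

end RingInverse

theorem Commute.add_natCast_left {S : Type*} [NonAssocSemiring S] {a b : S} (h : Commute a b)
    (n : ℕ) : Commute (a + n) b :=
  h.add_left (Nat.cast_commute n b)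

theorem Commute.add_natCast_right {S : Type*} [NonAssocSemiring S] {a b : S} (h : Commute a b)
    (n : ℕ) : Commute a (b + n) :=
  h.add_right (Nat.commute_cast a n)

theorem mul_ringInverse_mul_add_comm {S : Type*} [Semiring S] {c w x : S} (hc : IsUnit c)
    (hwc : Commute w c) (hwx : Commute w x) :
    x * c⁻¹ʳ * (c * w + x) = (c * w + x) * c⁻¹ʳ * x := by
  have hconj : c * w * c⁻¹ʳ = w := by rw [← hwc.eq, Ring.mul_inverse_cancel_right _ _ hc]
  rw [mul_add, add_mul, add_mul, hconj, mul_assoc x, Ring.inverse_mul_cancel_left _ _ hc, hwx.eq]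

section ShiftedFactorial
variable {R : Type*} [Ring R]

theorem opr_succ (n : ℕ) (f : ℕ → R) : opr (n + 1) f = opr n f * f n := by
  simp [opr, List.range_succ]

theorem Commute.opr_right {a : R} {n : ℕ} {f : ℕ → R} (h : ∀ j < n, Commute a (f j)) :
    Commute a (opr n f) := by
  induction n with
  | zero => exact Commute.one_right a
  | succ n ih =>
    rw [opr_succ]
    exact (ih fun j hj => h j (by omega)).mul_right (h n n.lt_succ_self)

theorem mul_opr_eq_opr_mul {f g y : ℕ → R} {n : ℕ} (h : ∀ j < n, y j * g j = f j * y (j + 1)) :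
    y 0 * opr n g = opr n f * y n := by
  induction n with
  | zero => simp [opr]
  | succ n ih =>
    rw [opr_succ, opr_succ, ← mul_assoc, ih fun j hj => h j (by omega), mul_assoc,
      h n n.lt_succ_self, mul_assoc]

/-- `shiftedFactorialII a₁ a₂ c₁ c₂ n` is `⌊a₁, a₂; c₁, c₂⌉_n`. -/
noncomputable def shiftedFactorialII (a₁ a₂ c₁ c₂ : R) (n : ℕ) : R :=
  opr n fun j => (c₁ + j)⁻¹ʳ * (a₁ + j) * ((c₂ + j)⁻¹ʳ * (a₂ + j))

theorem shiftedFactorialII_succ (a₁ a₂ c₁ c₂ : R) (n : ℕ) :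
    shiftedFactorialII a₁ a₂ c₁ c₂ (n + 1) =
      shiftedFactorialII a₁ a₂ c₁ c₂ n * ((c₁ + n)⁻¹ʳ * (a₁ + n) * ((c₂ + n)⁻¹ʳ * (a₂ + n))) :=
  opr_succ n _

theorem Commute.shiftedFactorialII_right {d a₁ a₂ c₁ c₂ : R} (h₁ : Commute d a₁)
    (h₂ : Commute d a₂) (h₃ : Commute d c₁) (h₄ : Commute d c₂) (n : ℕ) :
    Commute d (shiftedFactorialII a₁ a₂ c₁ c₂ n) :=
  Commute.opr_right fun j _ =>
    ((h₃.add_right (Nat.commute_cast d j)).ringInverse_right.mul_right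
      (h₁.add_right (Nat.commute_cast d j))).mul_right
    ((h₄.add_right (Nat.commute_cast d j)).ringInverse_right.mul_right
      (h₂.add_right (Nat.commute_cast d j)))

section Contiguity
variable {b₁ b₂ c e x : R}

theorem shiftedFactorialII_contiguity_step (hb₁ : Commute e b₁) (hb₂ : Commute e b₂)
    (hc : Commute e c) (hx : Commute e x)
    (hrel : ∀ t : ℕ, (b₁ + t) * (b₂ + t) = (c + t) * (e + t) + x) (j : ℕ)
    (hcj : IsUnit (c + ↑(j + 1))) (he₀ : IsUnit (e - 1 + j)) (he₁ : IsUnit (e + j)) :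
    (c + j)⁻¹ʳ * x * (e - 1 + j) *
        ((c + 1 + j)⁻¹ʳ * (b₁ + 1 + j) * ((e - 1 + j)⁻¹ʳ * (b₂ + 1 + j))) =
      (c + j)⁻¹ʳ * (b₁ + 1 + j) * ((e + j)⁻¹ʳ * (b₂ + 1 + j)) *
        ((c + ↑(j + 1))⁻¹ʳ * x * (e - 1 + ↑(j + 1))) := by
  have hshift : ∀ y : R, y + 1 + j = y + ↑(j + 1) := fun y => by push_cast; abel
  have he : e - 1 + ↑(j + 1) = e + j := by push_cast; abel
  rw [hshift c, hshift b₁, hshift b₂, he]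
  set c' := c + ↑(j + 1)
  set β := b₁ + ↑(j + 1)
  set α := b₂ + ↑(j + 1)
  have hc' : Commute e c'⁻¹ʳ := (hc.add_natCast_right _).ringInverse_right
  have hu : Commute (e - 1 + j) (c'⁻¹ʳ * β) :=
    ((hc'.mul_right (hb₁.add_natCast_right _)).sub_left (Commute.one_left _)).add_natCast_left j
  have hv : Commute (e + j) (α * c'⁻¹ʳ * x) :=
    (((hb₂.add_natCast_right _).mul_right hc').mul_right hx).add_natCast_left j
  have hαβ : x * c'⁻¹ʳ * (β * α) = β * α * c'⁻¹ʳ * x := by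
    rw [hrel (j + 1)]
    exact mul_ringInverse_mul_add_comm hcj ((hc.add_natCast_right _).add_natCast_left _)
      (hx.add_natCast_left _)
  calc (c + j)⁻¹ʳ * x * (e - 1 + j) * (c'⁻¹ʳ * β * ((e - 1 + j)⁻¹ʳ * α))
      = (c + j)⁻¹ʳ * x * ((e - 1 + j) * (c'⁻¹ʳ * β) * ((e - 1 + j)⁻¹ʳ * α)) := by
        simp only [mul_assoc]
    _ = (c + j)⁻¹ʳ * (x * c'⁻¹ʳ * (β * α)) := by
        rw [hu.mul_mul_ringInverse_mul_cancel he₀]; simp only [mul_assoc]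
    _ = (c + j)⁻¹ʳ * (β * ((e + j)⁻¹ʳ * (α * c'⁻¹ʳ * x * (e + j)))) := by
        rw [hαβ, hv.ringInverse_mul_mul_cancel he₁]; simp only [mul_assoc]
    _ = (c + j)⁻¹ʳ * β * ((e + j)⁻¹ʳ * α) * (c'⁻¹ʳ * x * (e + j)) := by
        simp only [mul_assoc]

theorem shiftedFactorialII_contiguity (hb₁ : Commute e b₁) (hb₂ : Commute e b₂)
    (hc : Commute e c) (hx : Commute e x)
    (hrel : ∀ t : ℕ, (b₁ + t) * (b₂ + t) = (c + t) * (e + t) + x) (n : ℕ)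
    (hcu : ∀ j ≤ n, IsUnit (c + j)) (heu : ∀ j ≤ n, IsUnit (e + j))
    (heu' : ∀ j ≤ n, IsUnit (e - 1 + j)) :
    c⁻¹ʳ * x * (e - 1) * shiftedFactorialII (b₁ + 1) (b₂ + 1) (c + 1) (e - 1) n =
      shiftedFactorialII (b₁ + 1) (b₂ + 1) c e n * ((c + n)⁻¹ʳ * x * (e - 1 + n)) := by
  have := mul_opr_eq_opr_mul (y := fun j : ℕ => (c + j)⁻¹ʳ * x * (e - 1 + j)) fun j hj =>
    shiftedFactorialII_contiguity_step hb₁ hb₂ hc hx hrel j (hcu (j + 1) hj) (heu' j hj.le)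
      (heu j hj.le)
  simp only [Nat.cast_zero, add_zero] at this
  exact this

theorem shiftedFactorialII_addition (hb₁ : Commute e b₁) (hb₂ : Commute e b₂)
    (hc : Commute e c) (hx : Commute e x)
    (hrel : ∀ t : ℕ, (b₁ + t) * (b₂ + t) = (c + t) * (e + t) + x) (n : ℕ)
    (hcu : ∀ j ≤ n, IsUnit (c + j)) (heu : ∀ j ≤ n, IsUnit (e + j))
    (heu' : ∀ j ≤ n, IsUnit (e - 1 + j)) (hb₁n : IsUnit (b₁ + n)) (hb₂n : IsUnit (b₂ + n))
    (hb₁n' : IsUnit (b₁ + 1 + n)) (hb₂n' : IsUnit (b₂ + 1 + n)) :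
    shiftedFactorialII (b₁ + 1) (b₂ + 1) c e n * ((b₂ + n)⁻¹ʳ * (b₁ + n)⁻¹ʳ) +
        c⁻¹ʳ * x * (e - 1) * ((e - 1 + n)⁻¹ʳ * (e + n)⁻¹ʳ) *
          shiftedFactorialII (b₁ + 1) (b₂ + 1) (c + 1) (e - 1) n *
          ((b₂ + n)⁻¹ʳ * (b₁ + n)⁻¹ʳ) =
      shiftedFactorialII (b₁ + 1) (b₂ + 1) c e (n + 1) *
        ((b₂ + 1 + n)⁻¹ʳ * (b₁ + 1 + n)⁻¹ʳ) := by
  set P := shiftedFactorialII (b₁ + 1) (b₂ + 1) c e n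
  set Q := shiftedFactorialII (b₁ + 1) (b₂ + 1) (c + 1) (e - 1) n
  set Y := (b₂ + n)⁻¹ʳ * (b₁ + n)⁻¹ʳ
  have heQ : Commute e Q := (hb₁.add_right (Commute.one_right e)).shiftedFactorialII_right
    (hb₂.add_right (Commute.one_right e)) (hc.add_right (Commute.one_right e))
    ((Commute.refl e).sub_right (Commute.one_right e)) n
  have hsQ : Commute ((e - 1 + n)⁻¹ʳ * (e + n)⁻¹ʳ) Q :=
    (((heQ.sub_left (Commute.one_left Q)).add_natCast_left n).ringInverse_left).mul_left
      (heQ.add_natCast_left n).ringInverse_left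
  have hwc : Commute (e + n) (c + n) := (hc.add_natCast_right n).add_natCast_left n
  have hwx : Commute (e + n) x := hx.add_natCast_left n
  have hone :
      1 + (c + n)⁻¹ʳ * x * (e + n)⁻¹ʳ = (c + n)⁻¹ʳ * ((b₁ + n) * (b₂ + n)) * (e + n)⁻¹ʳ := by
    rw [hrel n, mul_add, add_mul, ← mul_assoc, Ring.inverse_mul_cancel _ (hcu n le_rfl), one_mul,
      Ring.mul_inverse_cancel _ (heu n le_rfl)]
  have hwβα : Commute (e + n)⁻¹ʳ ((b₁ + n) * (b₂ + n)) := by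
    rw [hrel n]; exact ((hwc.mul_right (Commute.refl _)).add_right hwx).ringInverse_left
  have hwβ : Commute (e + n)⁻¹ʳ (b₁ + 1 + n) :=
    (((hb₁.add_right (Commute.one_right e)).add_natCast_right n).add_natCast_left
      n).ringInverse_left
  calc P * Y + c⁻¹ʳ * x * (e - 1) * ((e - 1 + n)⁻¹ʳ * (e + n)⁻¹ʳ) * Q * Y
      = P * Y + c⁻¹ʳ * x * (e - 1) * Q * ((e - 1 + n)⁻¹ʳ * (e + n)⁻¹ʳ * Y) := by
        rw [mul_assoc _ _ Q, hsQ.eq]; simp only [mul_assoc]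
    _ = P * Y + P * ((c + n)⁻¹ʳ * x * (e - 1 + n)) * ((e - 1 + n)⁻¹ʳ * (e + n)⁻¹ʳ * Y) := by
        rw [shiftedFactorialII_contiguity hb₁ hb₂ hc hx hrel n hcu heu heu']
    _ = P * ((1 + (c + n)⁻¹ʳ * x * (e + n)⁻¹ʳ) * Y) := by
        rw [add_mul, one_mul, mul_add P]; simp only [mul_assoc]
        rw [Ring.mul_inverse_cancel_left _ _ (heu' n le_rfl)]
    _ = P * ((c + n)⁻¹ʳ * (e + n)⁻¹ʳ) := by
        rw [hone, mul_assoc _ _ (e + n)⁻¹ʳ, ← hwβα.eq]; simp only [mul_assoc]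
        rw [Ring.mul_inverse_cancel_left _ _ hb₂n, Ring.mul_inverse_cancel _ hb₁n, mul_one]
    _ = P * ((c + n)⁻¹ʳ * (b₁ + 1 + n) * ((e + n)⁻¹ʳ * (b₂ + 1 + n)) *
          ((b₂ + 1 + n)⁻¹ʳ * (b₁ + 1 + n)⁻¹ʳ)) := by
        simp only [mul_assoc]
        rw [Ring.mul_inverse_cancel_left _ _ hb₂n', ← mul_assoc (b₁ + 1 + n), ← hwβ.eq, mul_assoc,
          Ring.mul_inverse_cancel _ hb₁n', mul_one]
    _ = _ := by rw [shiftedFactorialII_succ, mul_assoc (shiftedFactorialII _ _ _ _ n)]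

end Contiguity

end ShiftedFactorial

section AdditionTypeII3
variable {R : Type*} [Ring R] {A B C : R}

theorem commute_sub_sub_of_commute_add_sub {y : R} (h : Commute (A + B - C) y) :
    Commute (C - A - B) y := by
  rw [show C - A - B = -(A + B - C) by abel]
  exact h.neg_left

theorem sub_add_natCast_mul_sub_add_natCast (hB : Commute (A + B - C) B) (t : ℕ) :
    (C - B + t) * (C - A + t) = (C + t) * (C - A - B + t) + A * B := by
  have h : (C - B + t) * (C - A + t) - ((C + t) * (C - A - B + t) + A * B) =
      B * (A + B - C) - (A + B - C) * B + (t * B - B * t) := by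
    noncomm_ring
  rwa [hB.eq, Nat.cast_comm, sub_self, sub_self, add_zero, sub_eq_zero] at h

theorem additionTypeII3_coefficient_eq (hB : Commute (A + B - C) B) (n : ℕ) :
    C⁻¹ʳ * A * (A + B - C + 1 - n)⁻¹ʳ * B * (A + B - C - n)⁻¹ʳ * (A + B - C + 1) =
      -(C⁻¹ʳ * (A * B) * (C - A - B - 1) * ((C - A - B - 1 + n)⁻¹ʳ * (C - A - B + n)⁻¹ʳ)) := by
  rw [show A + B - C + 1 - n = -(C - A - B - 1 + n) by abel,
    show A + B - C - n = -(C - A - B + n) by abel, show A + B - C + 1 = -(C - A - B - 1) by abel,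
    Ring.inverse_neg, Ring.inverse_neg]
  have hEE : Commute (C - A - B - 1) (C - A - B) := (Commute.refl _).sub_left (Commute.one_left _)
  have huB : Commute (C - A - B - 1 + n)⁻¹ʳ B :=
    (((commute_sub_sub_of_commute_add_sub hB).sub_left (Commute.one_left B)).add_natCast_left
      n).ringInverse_left
  have hEuv : Commute (C - A - B - 1) ((C - A - B - 1 + n)⁻¹ʳ * (C - A - B + n)⁻¹ʳ) :=
    ((hEE.sub_right (Commute.one_right _)).add_natCast_right n).ringInverse_right.mul_right
      (hEE.add_natCast_right n).ringInverse_right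
  simp only [mul_neg, neg_mul, neg_neg]
  rw [mul_assoc (C⁻¹ʳ * A), huB.eq, mul_assoc (C⁻¹ʳ * (A * B)), hEuv.eq]
  simp only [mul_assoc]

end AdditionTypeII3

theorem additionTypeII3_general {R : Type*} [Ring R] (A B C : R) (n : ℕ)
    (hDA : (A + B - C) * A = A * (A + B - C))
    (hDB : (A + B - C) * B = B * (A + B - C))
    (hDC : (A + B - C) * C = C * (A + B - C))
    (hC : ∀ m : ℕ, m < n + 1 → IsUnit (C + (m : R)))
    (hCAB : ∀ m : ℕ, m < n + 1 → IsUnit (C - A - B + (m : R)))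
    (hCAB1 : IsUnit (C - A - B - 1))
    (hCAn : IsUnit (C - A + (n : R))) (hCBn : IsUnit (C - B + (n : R)))
    (hCAn1 : IsUnit (C - A + (n : R) + 1)) (hCBn1 : IsUnit (C - B + (n : R) + 1)) :
    opr n (fun j =>
        Ring.inverse (C + (j : R)) * (C - B + (j : R) + 1) *
        (Ring.inverse (C - A - B + (j : R)) * (C - A + (j : R) + 1))) *
        (Ring.inverse (C - A + (n : R)) * Ring.inverse (C - B + (n : R))) -
      Ring.inverse C * A * Ring.inverse (A + B - C + 1 - (n : R)) * B *
        Ring.inverse (A + B - C - (n : R)) * (A + B - C + 1) *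
        opr n (fun j =>
          Ring.inverse (C + 1 + (j : R)) * (C - B + (j : R) + 1) *
          (Ring.inverse (C - A - B - 1 + (j : R)) * (C - A + (j : R) + 1))) *
        (Ring.inverse (C - A + (n : R)) * Ring.inverse (C - B + (n : R))) =
    opr (n + 1) (fun j =>
      Ring.inverse (C + (j : R)) * (C - B + (j : R) + 1) *
      (Ring.inverse (C - A - B + (j : R)) * (C - A + (j : R) + 1))) *
      (Ring.inverse (C - A + (n : R) + 1) * Ring.inverse (C - B + (n : R) + 1)) := by
  have hEA := commute_sub_sub_of_commute_add_sub hDA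
  have hEB := commute_sub_sub_of_commute_add_sub hDB
  have hEC := commute_sub_sub_of_commute_add_sub hDC
  have hE₁ : ∀ j ≤ n, IsUnit (C - A - B - 1 + j) := by
    rintro (_ | j) hj
    · simpa using hCAB1
    · rw [show C - A - B - 1 + ↑(j + 1) = C - A - B + j by push_cast; abel]
      exact hCAB j (by omega)
  have hshift : ∀ (y : R) (j : ℕ), y + j + 1 = y + 1 + j := fun y j => add_right_comm y j 1
  simp only [hshift] at hCAn1 hCBn1 ⊢
  rw [additionTypeII3_coefficient_eq hDB n, neg_mul, neg_mul, sub_neg_eq_add]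
  exact shiftedFactorialII_addition (hEC.sub_right hEB) (hEC.sub_right hEA) hEC
    (hEA.mul_right hEB) (sub_add_natCast_mul_sub_add_natCast hDB) n
    (fun j hj => hC j (Nat.lt_succ_of_le hj)) (fun j hj => hCAB j (Nat.lt_succ_of_le hj)) hE₁
    hCBn hCAn hCBn1 hCAn1

/-- Addition formula for noncommutative shifted factorials of type II with
three parameters (Lemma 3 of the paper, type II case). -/
theorem additionTypeII3 {R : Type*} [Ring R] (A B C : R) (n : ℕ)
    (hDA : (A + B - C) * A = A * (A + B - C))
    (hDB : (A + B - C) * B = B * (A + B - C))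
    (hDC : (A + B - C) * C = C * (A + B - C))
    (hC : ∀ m : ℕ, m < n + 1 → IsUnit (C + (m : R)))
    (hCAB : ∀ m : ℕ, m < n + 1 → IsUnit (C - A - B + (m : R)))
    (hCAB1 : IsUnit (C - A - B - 1))
    (hD1 : IsUnit (A + B - C + 1 - (n : R)))
    (hD2 : IsUnit (A + B - C - (n : R)))
    (hCAn : IsUnit (C - A + (n : R))) (hCBn : IsUnit (C - B + (n : R)))
    (hCAn1 : IsUnit (C - A + (n : R) + 1)) (hCBn1 : IsUnit (C - B + (n : R) + 1)) :
    opr n (fun j =>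
        Ring.inverse (C + (j : R)) * (C - B + (j : R) + 1) *
        (Ring.inverse (C - A - B + (j : R)) * (C - A + (j : R) + 1))) *
        (Ring.inverse (C - A + (n : R)) * Ring.inverse (C - B + (n : R))) -
      Ring.inverse C * A * Ring.inverse (A + B - C + 1 - (n : R)) * B *
        Ring.inverse (A + B - C - (n : R)) * (A + B - C + 1) *
        opr n (fun j =>
          Ring.inverse (C + 1 + (j : R)) * (C - B + (j : R) + 1) *
          (Ring.inverse (C - A - B - 1 + (j : R)) * (C - A + (j : R) + 1))) *
        (Ring.inverse (C - A + (n : R)) * Ring.inverse (C - B + (n : R))) =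
    opr (n + 1) (fun j =>
      Ring.inverse (C + (j : R)) * (C - B + (j : R) + 1) *
      (Ring.inverse (C - A - B + (j : R)) * (C - A + (j : R) + 1))) *
      (Ring.inverse (C - A + (n : R) + 1) * Ring.inverse (C - B + (n : R) + 1)) :=
  additionTypeII3_general A B C n hDA hDB hDC hC hCAB hCAB1 hCAn hCBn hCAn1 hCBn1
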